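/- arXiv:1901.08782 — 3 statements merged into one kernel-verified Lean document; each statement's English description precedes it below -/
import Mathlib

section
/- Let Qₛ be an M×M and Qᵣ a Kₜ×Kₜ complex Hermitian positive semidefinite matrix, H₁ a Kᵣ×M complex matrix and H̄ᵣ a Kᵣ×Kₜ complex matrix. Then det(I + H₁ Qₛ H₁ᴴ + H̄ᵣ Qᵣ H̄ᵣᴴ) / det(I + H̄ᵣ Qᵣ H̄ᵣᴴ) = det(I + H₁ Qₛ H₁ᴴ − H₁ Qₛ H₁ᴴ H̄ᵣ (I + Qᵣ H̄ᵣᴴ H̄ᵣ)⁻¹ Qᵣ H̄ᵣᴴ), where all determinants involved are nonzero (the denominator determinant is that of a positive definite matrix). -/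
open Matrix ComplexOrder

/-!
Factor `1 + A + B = (1 + A (1 + B)⁻¹)(1 + B)`, so the quotient of determinants is
`det (1 + A (1 + B)⁻¹)`. With `B = H̄ᵣ (Qᵣ H̄ᵣᴴ)` the push-through identity
`(1 + U V)⁻¹ = 1 - U (1 + V U)⁻¹ V` turns `(1 + B)⁻¹` into `1 - H̄ᵣ (1 + Qᵣ H̄ᵣᴴ H̄ᵣ)⁻¹ Qᵣ H̄ᵣᴴ`.
The denominator is nonzero because `1 + H̄ᵣ Qᵣ H̄ᵣᴴ` is positive definite.
-/

namespace Matrix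

variable {m n R : Type*} [Fintype m] [Fintype n] [DecidableEq m] [DecidableEq n]

theorem inv_one_add_mul_eq_one_sub [CommRing R] (U : Matrix m n R) (V : Matrix n m R)
    (h : IsUnit (1 + U * V).det) :
    (1 + U * V)⁻¹ = 1 - U * (1 + V * U)⁻¹ * V := by
  have hVU : (1 + V * U) * (1 + V * U)⁻¹ = 1 :=
    mul_nonsing_inv _ (by rwa [det_one_add_mul_comm])
  refine inv_eq_right_inv ?_
  calc (1 + U * V) * (1 - U * (1 + V * U)⁻¹ * V)
      = 1 + U * V - U * ((1 + V * U) * (1 + V * U)⁻¹) * V := by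
        simp only [Matrix.mul_sub, Matrix.add_mul, Matrix.mul_add, Matrix.one_mul,
          Matrix.mul_one, Matrix.mul_assoc]
    _ = 1 := by rw [hVU, Matrix.mul_one, add_sub_cancel_right]

theorem det_add_div_det {K : Type*} [Field K] (X A : Matrix m m K) (h : X.det ≠ 0) :
    (X + A).det / X.det = (1 + A * X⁻¹).det := by
  have hX : (1 + A * X⁻¹) * X = X + A := by
    rw [Matrix.add_mul, Matrix.one_mul, Matrix.mul_assoc, nonsing_inv_mul _ h.isUnit,
      Matrix.mul_one]
  rw [← hX, det_mul, mul_div_cancel_right₀ _ h]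

end Matrix

theorem stmt_4_general (M Kt Kr : ℕ)
    (Qs : Matrix (Fin M) (Fin M) ℂ)
    (Qr : Matrix (Fin Kt) (Fin Kt) ℂ) (hQr : Qr.PosSemidef)
    (H1 : Matrix (Fin Kr) (Fin M) ℂ) (Hr : Matrix (Fin Kr) (Fin Kt) ℂ) :
    (1 + Hr * Qr * Hrᴴ).det ≠ 0 ∧
    (1 + H1 * Qs * H1ᴴ + Hr * Qr * Hrᴴ).det / (1 + Hr * Qr * Hrᴴ).det =
      (1 + H1 * Qs * H1ᴴ -
        H1 * Qs * H1ᴴ * Hr * (1 + Qr * Hrᴴ * Hr)⁻¹ * Qr * Hrᴴ).det := by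
  have hdet : (1 + Hr * Qr * Hrᴴ).det ≠ 0 :=
    (PosDef.one.add_posSemidef (hQr.mul_mul_conjTranspose_same Hr)).det_pos.ne'
  refine ⟨hdet, ?_⟩
  rw [add_right_comm, det_add_div_det _ _ hdet, Matrix.mul_assoc Hr,
    inv_one_add_mul_eq_one_sub _ _ (by rw [← Matrix.mul_assoc]; exact hdet.isUnit)]
  congr 1
  simp only [Matrix.mul_sub, Matrix.mul_one, add_sub_assoc, Matrix.mul_assoc]

/-- Quotient-to-difference form of the full-duplex source–relay rate:
`det(I + H₁QₛH₁ᴴ + H̄ᵣQᵣH̄ᵣᴴ) / det(I + H̄ᵣQᵣH̄ᵣᴴ)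
  = det(I + H₁QₛH₁ᴴ − H₁QₛH₁ᴴH̄ᵣ(I + QᵣH̄ᵣᴴH̄ᵣ)⁻¹QᵣH̄ᵣᴴ)`,
with nonzero denominator determinant. -/
theorem stmt_4 (M Kt Kr : ℕ)
    (Qs : Matrix (Fin M) (Fin M) ℂ) (hQs : Qs.PosSemidef)
    (Qr : Matrix (Fin Kt) (Fin Kt) ℂ) (hQr : Qr.PosSemidef)
    (H1 : Matrix (Fin Kr) (Fin M) ℂ) (Hr : Matrix (Fin Kr) (Fin Kt) ℂ) :
    (1 + Hr * Qr * Hrᴴ).det ≠ 0 ∧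
    (1 + H1 * Qs * H1ᴴ + Hr * Qr * Hrᴴ).det / (1 + Hr * Qr * Hrᴴ).det =
      (1 + H1 * Qs * H1ᴴ -
        H1 * Qs * H1ᴴ * Hr * (1 + Qr * Hrᴴ * Hr)⁻¹ * Qr * Hrᴴ).det :=
  stmt_4_general M Kt Kr Qs Qr hQr H1 Hr
end

section
/- Let n ∈ ℕ, let L, R₁, R₂ be n×n complex unitary matrices, and let Σ₁, Γₛ, Γᵣ, Σᵣ be n×n real diagonal matrices with nonnegative diagonal entries σ₁ᵢ, γ_{s,i}, γ_{r,i}, σ_{r,i}. Define H₁ = L Σ₁ R₁ᴴ, Qₛ = R₁ Γₛ R₁ᴴ, Qᵣ = R₂ Γᵣ R₂ᴴ, and the aligned RSI channel H̄ᵣ = L Σᵣ R₂ᴴ. Then det(I + H₁ Qₛ H₁ᴴ + H̄ᵣ Qᵣ H̄ᵣᴴ) / det(I + H̄ᵣ Qᵣ H̄ᵣᴴ) = ∏ᵢ (1 + σ₁ᵢ² γ_{s,i} / (1 + γ_{r,i} σ_{r,i}²)); equivalently, the source-relay rate R^FD_sr = log₂ of the left-hand side equals Σᵢ log₂(1 +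 σ₁ᵢ² γ_{s,i} / (1 + γ_{r,i} σ_{r,i}²)). -/
open Matrix

/-!
Because `H̄ᵣ` shares its left singular basis `L` with `H₁`, and `Qₛ`, `Qᵣ` are diagonalised by the
right singular bases of `H₁`, `H̄ᵣ`, both matrices under the determinants are simultaneously
diagonalised by `L`: they equal `L (I + Σ₁²Γₛ + ΓᵣΣᵣ²) Lᴴ` and `L (I + ΓᵣΣᵣ²) Lᴴ`. Unitary
conjugation preserves determinants, so the ratio is a ratio of products of diagonal entries.
-/

namespace Matrix

variable {m n R : Type*} [Fintype n] [DecidableEq n]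

theorem det_mul_mul_conjTranspose_of_conjTranspose_mul_self [CommRing R] [StarRing R]
    {U : Matrix n n R} (hU : Uᴴ * U = 1) (A : Matrix n n R) :
    (U * A * Uᴴ).det = A.det := by
  calc (U * A * Uᴴ).det = A.det * (Uᴴ * U).det := by simp only [det_mul]; ring
    _ = A.det := by rw [hU, det_one, mul_one]

theorem diagonal_sandwich_of_conjTranspose_mul_self [CommSemiring R] [StarRing R]
    (A : Matrix m n R) {U : Matrix n n R} (hU : Uᴴ * U = 1) (a b : n → R) :
    (A * diagonal a * Uᴴ) * (U * diagonal b * Uᴴ) * (A * diagonal a * Uᴴ)ᴴ =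
      A * diagonal (fun i => a i * b i * star (a i)) * Aᴴ := by
  have hcancel : ∀ {k : Type _} (B : Matrix n k R), Uᴴ * (U * B) = B := fun B => by
    rw [← Matrix.mul_assoc, hU, Matrix.one_mul]
  simp only [conjTranspose_mul, conjTranspose_conjTranspose, diagonal_conjTranspose,
    Matrix.mul_assoc]
  rw [hcancel, hcancel, ← Matrix.mul_assoc (diagonal b), diagonal_mul_diagonal,
    ← Matrix.mul_assoc (diagonal a), diagonal_mul_diagonal]
  simp only [mul_assoc, Pi.star_apply]

theorem det_one_add_mul_diagonal_mul_conjTranspose [CommRing R] [StarRing R]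
    {U : Matrix n n R} (hU : Uᴴ * U = 1) (d : n → R) :
    (1 + U * diagonal d * Uᴴ).det = ∏ i, (1 + d i) := by
  have hconj : 1 + U * diagonal d * Uᴴ = U * (1 + diagonal d) * Uᴴ := by
    rw [Matrix.mul_add, Matrix.add_mul, Matrix.mul_one, mul_eq_one_comm.mp hU]
  rw [hconj, det_mul_mul_conjTranspose_of_conjTranspose_mul_self hU, ← diagonal_one,
    diagonal_add, det_diagonal]

theorem diagonal_ofReal_sandwich_of_conjTranspose_mul_self (A : Matrix m n ℂ)
    {U : Matrix n n ℂ} (hU : Uᴴ * U = 1) (a b : n → ℝ) :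
    (A * diagonal (fun i => (a i : ℂ)) * Uᴴ) * (U * diagonal (fun i => (b i : ℂ)) * Uᴴ) *
        (A * diagonal (fun i => (a i : ℂ)) * Uᴴ)ᴴ =
      A * diagonal (fun i => ((a i ^ 2 * b i : ℝ) : ℂ)) * Aᴴ := by
  rw [diagonal_sandwich_of_conjTranspose_mul_self A hU]
  congr 3 with i
  simp only [Complex.star_def, Complex.conj_ofReal]
  push_cast
  ring

end Matrix

theorem Finset.prod_div_prod_one_add {ι K : Type*} [Field K] (s : Finset ι) (a r : ι → K)
    (hr : ∀ i ∈ s, 1 + r i ≠ 0) :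
    (∏ i ∈ s, (1 + (a i + r i))) / ∏ i ∈ s, (1 + r i) = ∏ i ∈ s, (1 + a i / (1 + r i)) := by
  rw [← Finset.prod_div_distrib]
  refine Finset.prod_congr rfl fun i hi => ?_
  field_simp [hr i hi]
  ring

theorem stmt_8_general (n : ℕ) (L R1 R2 : Matrix (Fin n) (Fin n) ℂ)
    (hL : Lᴴ * L = 1) (hR1 : R1ᴴ * R1 = 1) (hR2 : R2ᴴ * R2 = 1)
    (σ1 γs γr σr : Fin n → ℝ)
    (hγs : ∀ i, 0 ≤ γs i)
    (hγr : ∀ i, 0 ≤ γr i)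
    (H1 Qs Qr Hr : Matrix (Fin n) (Fin n) ℂ)
    (hH1 : H1 = L * (Matrix.diagonal fun i => (σ1 i : ℂ)) * R1ᴴ)
    (hQs : Qs = R1 * (Matrix.diagonal fun i => (γs i : ℂ)) * R1ᴴ)
    (hQr : Qr = R2 * (Matrix.diagonal fun i => (γr i : ℂ)) * R2ᴴ)
    (hHr : Hr = L * (Matrix.diagonal fun i => (σr i : ℂ)) * R2ᴴ) :
    (1 + H1 * Qs * H1ᴴ + Hr * Qr * Hrᴴ).det / (1 + Hr * Qr * Hrᴴ).det =
      ((∏ i, (1 + (σ1 i) ^ 2 * γs i / (1 + γr i * (σr i) ^ 2)) : ℝ) : ℂ) ∧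
    Real.logb 2
        (((1 + H1 * Qs * H1ᴴ + Hr * Qr * Hrᴴ).det / (1 + Hr * Qr * Hrᴴ).det).re) =
      ∑ i, Real.logb 2 (1 + (σ1 i) ^ 2 * γs i / (1 + γr i * (σr i) ^ 2)) := by
  have hr : ∀ i, 0 < 1 + γr i * σr i ^ 2 := fun i =>
    add_pos_of_pos_of_nonneg one_pos (mul_nonneg (hγr i) (sq_nonneg _))
  have hratio : (1 + H1 * Qs * H1ᴴ + Hr * Qr * Hrᴴ).det / (1 + Hr * Qr * Hrᴴ).det =
      ((∏ i, (1 + σ1 i ^ 2 * γs i / (1 + γr i * σr i ^ 2)) : ℝ) : ℂ) := by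
    rw [hH1, hQs, hQr, hHr, diagonal_ofReal_sandwich_of_conjTranspose_mul_self L hR1,
      diagonal_ofReal_sandwich_of_conjTranspose_mul_self L hR2, add_assoc, ← Matrix.add_mul,
      ← Matrix.mul_add, diagonal_add, det_one_add_mul_diagonal_mul_conjTranspose hL,
      det_one_add_mul_diagonal_mul_conjTranspose hL,
      Finset.prod_div_prod_one_add _ _ _ fun i _ => by rw [mul_comm]; exact_mod_cast (hr i).ne']
    push_cast
    simp only [mul_comm (γr _ : ℂ)]
  refine ⟨hratio, ?_⟩
  rw [hratio, Complex.ofReal_re, Real.logb_prod]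
  exact fun i _ => (add_pos_of_pos_of_nonneg one_pos
    (div_nonneg (mul_nonneg (sq_nonneg _) (hγs i)) (hr i).le)).ne'

/-- Closed-form source–relay rate for the aligned worst-case RSI channel:
with `H₁ = LΣ₁R₁ᴴ`, `Qₛ = R₁ΓₛR₁ᴴ`, `Qᵣ = R₂ΓᵣR₂ᴴ` and `H̄ᵣ = LΣᵣR₂ᴴ`,
`det(I + H₁QₛH₁ᴴ + H̄ᵣQᵣH̄ᵣᴴ)/det(I + H̄ᵣQᵣH̄ᵣᴴ) = ∏ᵢ(1 + σ₁ᵢ²γₛᵢ/(1 + γᵣᵢσᵣᵢ²))`,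
and equivalently the rate `log₂` of the left-hand side equals
`Σᵢ log₂(1 + σ₁ᵢ²γₛᵢ/(1 + γᵣᵢσᵣᵢ²))`. -/
theorem stmt_8 (n : ℕ) (L R1 R2 : Matrix (Fin n) (Fin n) ℂ)
    (hL : Lᴴ * L = 1) (hR1 : R1ᴴ * R1 = 1) (hR2 : R2ᴴ * R2 = 1)
    (σ1 γs γr σr : Fin n → ℝ)
    (hσ1 : ∀ i, 0 ≤ σ1 i) (hγs : ∀ i, 0 ≤ γs i)
    (hγr : ∀ i, 0 ≤ γr i) (hσr : ∀ i, 0 ≤ σr i)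
    (H1 Qs Qr Hr : Matrix (Fin n) (Fin n) ℂ)
    (hH1 : H1 = L * (Matrix.diagonal fun i => (σ1 i : ℂ)) * R1ᴴ)
    (hQs : Qs = R1 * (Matrix.diagonal fun i => (γs i : ℂ)) * R1ᴴ)
    (hQr : Qr = R2 * (Matrix.diagonal fun i => (γr i : ℂ)) * R2ᴴ)
    (hHr : Hr = L * (Matrix.diagonal fun i => (σr i : ℂ)) * R2ᴴ) :
    (1 + H1 * Qs * H1ᴴ + Hr * Qr * Hrᴴ).det / (1 + Hr * Qr * Hrᴴ).det =
      ((∏ i, (1 + (σ1 i) ^ 2 * γs i / (1 + γr i * (σr i) ^ 2)) : ℝ) : ℂ) ∧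
    Real.logb 2
        (((1 + H1 * Qs * H1ᴴ + Hr * Qr * Hrᴴ).det / (1 + Hr * Qr * Hrᴴ).det).re) =
      ∑ i, Real.logb 2 (1 + (σ1 i) ^ 2 * γs i / (1 + γr i * (σr i) ^ 2)) :=
  stmt_8_general n L R1 R2 hL hR1 hR2 σ1 γs γr σr hγs hγr H1 Qs Qr Hr hH1 hQs hQr hHr
end

section
/- Let n ≥ 1, T > 0, and c, d : Fin n → ℝ with cᵢ > 0 and dᵢ > 0 for all i. Consider f(x) = Σᵢ log₂(1 + cᵢ/(1 + dᵢ xᵢ)) on the compact set S = {x : Fin n → ℝ | xᵢ ≥ 0 for all i and Σᵢ xᵢ ≤ T}. Then f attains its minimum on S, and every minimizer x* satisfies Σᵢ x*ᵢ = T. -/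
/-!
The set `S` is compact and `f` is continuous on it, so a minimizer exists. Each summand
`logb 2 (1 + cᵢ / (1 + dᵢ xᵢ))` is strictly decreasing in `xᵢ ≥ 0`, so a point of `S` with
`Σᵢ xᵢ < T` is never a minimizer: spending the remaining budget on any one coordinate stays
in `S` and strictly decreases `f`.
-/

open Finset Set

def budgetSet (ι : Type*) [Fintype ι] (T : ℝ) : Set (ι → ℝ) :=
  {x | (∀ i, 0 ≤ x i) ∧ ∑ i, x i ≤ T}

section BudgetSet

variable {ι : Type*} [Fintype ι]

theorem zero_mem_budgetSet {T : ℝ} (hT : 0 ≤ T) : (0 : ι → ℝ) ∈ budgetSet ι T :=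
  ⟨fun _ => le_rfl, by simpa using hT⟩

theorem budgetSet_subset_Icc (T : ℝ) : budgetSet ι T ⊆ Icc 0 (fun _ => T) :=
  fun _ hx => ⟨hx.1, fun i => (single_le_sum (fun j _ => hx.1 j) (mem_univ i)).trans hx.2⟩

theorem isClosed_budgetSet (T : ℝ) : IsClosed (budgetSet ι T) := by
  have hnonneg : IsClosed {x : ι → ℝ | ∀ i, 0 ≤ x i} := by
    simp only [ofPred_forall]
    exact isClosed_iInter fun i => isClosed_le continuous_const (continuous_apply i)
  exact hnonneg.inter (isClosed_le (continuous_finsetSum _ fun i _ => continuous_apply i)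
    continuous_const)

theorem isCompact_budgetSet (T : ℝ) : IsCompact (budgetSet ι T) :=
  isCompact_Icc.of_isClosed_subset (isClosed_budgetSet T) (budgetSet_subset_Icc T)

theorem add_single_slack_mem_budgetSet [DecidableEq ι] {T : ℝ} {x : ι → ℝ}
    (hx : x ∈ budgetSet ι T) (i : ι) :
    x + Pi.single i (T - ∑ j, x j) ∈ budgetSet ι T := by
  have hslack : 0 ≤ T - ∑ j, x j := sub_nonneg.2 hx.2
  refine ⟨fun j => add_nonneg (hx.1 j) ?_, ?_⟩
  · rcases eq_or_ne j i with rfl | hji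
    · simpa using hslack
    · simp [hji]
  · simp [sum_add_distrib]

theorem exists_isMinOn_sum_budgetSet {g : ι → ℝ → ℝ} (hg : ∀ i, ContinuousOn (g i) (Ici 0))
    {T : ℝ} (hT : 0 ≤ T) :
    ∃ x ∈ budgetSet ι T, IsMinOn (fun y => ∑ i, g i (y i)) (budgetSet ι T) x := by
  refine (isCompact_budgetSet T).exists_isMinOn ⟨0, zero_mem_budgetSet hT⟩ ?_
  refine continuousOn_finsetSum _ fun i _ => (hg i).comp (continuous_apply i).continuousOn ?_
  exact fun y hy => hy.1 i

theorem sum_eq_of_isMinOn_sum_budgetSet [Nonempty ι] {g : ι → ℝ → ℝ}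
    (hg : ∀ i, StrictAntiOn (g i) (Ici 0)) {T : ℝ} {x : ι → ℝ} (hx : x ∈ budgetSet ι T)
    (hmin : IsMinOn (fun y => ∑ i, g i (y i)) (budgetSet ι T) x) :
    ∑ i, x i = T := by
  classical
  by_contra hne
  have hslack : 0 < T - ∑ j, x j := sub_pos.2 (lt_of_le_of_ne hx.2 hne)
  obtain ⟨i₀⟩ := ‹Nonempty ι›
  set y := x + Pi.single i₀ (T - ∑ j, x j)
  have hy : y ∈ budgetSet ι T := add_single_slack_mem_budgetSet hx i₀
  have hxy : ∀ i, x i ≤ y i := fun i => le_add_of_nonneg_right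
    ((Pi.single_nonneg.2 hslack.le : (0 : ι → ℝ) ≤ _) i)
  have hdecr : ∑ i, g i (y i) < ∑ i, g i (x i) := by
    refine sum_lt_sum (fun i _ => (hg i).antitoneOn (hx.1 i) (hy.1 i) (hxy i)) ⟨i₀, mem_univ _, ?_⟩
    exact hg i₀ (hx.1 i₀) (hy.1 i₀) (by simpa [y] using hslack)
  exact (hmin hy).not_gt hdecr

end BudgetSet

theorem continuousOn_logb_one_add_div_one_add_mul {b c d : ℝ} (hc : 0 ≤ c) (hd : 0 ≤ d) :
    ContinuousOn (fun t => Real.logb b (1 + c / (1 + d * t))) (Ici 0) := by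
  intro t (ht : 0 ≤ t)
  have hden : 0 < 1 + d * t := by positivity
  have harg : 0 < 1 + c / (1 + d * t) := by positivity
  exact ContinuousAt.continuousWithinAt <| by
    fun_prop (disch := first | exact hden.ne' | exact harg.ne')

theorem strictAntiOn_logb_one_add_div_one_add_mul {b c d : ℝ} (hb : 1 < b) (hc : 0 < c)
    (hd : 0 < d) : StrictAntiOn (fun t => Real.logb b (1 + c / (1 + d * t))) (Ici 0) := by
  intro s (hs : 0 ≤ s) t (ht : 0 ≤ t) hst
  have hs' : 0 < 1 + d * s := by positivity
  refine Real.logb_lt_logb hb (by positivity) ?_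
  gcongr

/-- The inner minimization of the robust design is attained and uses the full
uncertainty budget: on `S = {x | x ≥ 0, Σᵢ xᵢ ≤ T}`, the function
`f(x) = Σᵢ log₂(1 + cᵢ/(1 + dᵢxᵢ))` attains its minimum, and every minimizer `x*`
satisfies `Σᵢ x*ᵢ = T`. -/
theorem stmt_12 (n : ℕ) (hn : 1 ≤ n) (T : ℝ) (hT : 0 < T) (c d : Fin n → ℝ)
    (hc : ∀ i, 0 < c i) (hd : ∀ i, 0 < d i)
    (S : Set (Fin n → ℝ)) (hS : S = {x | (∀ i, 0 ≤ x i) ∧ ∑ i, x i ≤ T})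
    (f : (Fin n → ℝ) → ℝ)
    (hf : f = fun x => ∑ i, Real.logb 2 (1 + c i / (1 + d i * x i))) :
    (∃ x ∈ S, ∀ y ∈ S, f x ≤ f y) ∧
    (∀ x ∈ S, (∀ y ∈ S, f x ≤ f y) → ∑ i, x i = T) := by
  change S = budgetSet (Fin n) T at hS
  subst hS hf
  have : Nonempty (Fin n) := ⟨⟨0, hn⟩⟩
  refine ⟨?_, fun x hx hmin => ?_⟩
  · obtain ⟨x, hx, hmin⟩ := exists_isMinOn_sum_budgetSet
      (fun i => continuousOn_logb_one_add_div_one_add_mul (hc i).le (hd i).le) hT.le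
    exact ⟨x, hx, fun y hy => hmin hy⟩
  · exact sum_eq_of_isMinOn_sum_budgetSet
      (fun i => strictAntiOn_logb_one_add_div_one_add_mul one_lt_two (hc i) (hd i)) hx hmin
end
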